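/- arXiv:1802.04968 — 3 statements merged into one kernel-verified Lean document; each statement's English description precedes it below -/
import Mathlib

section
/- Let G be a finite k-cozy graph whose edge connectivity λ(G) satisfies λ(G) < k. Then λ(G) is even. -/
open SimpleGraph

/-- A proper edge `k`-coloring arising from a `1`-factorization: every vertex is incident
to exactly one edge of each of the `k` colors. -/
def IsOneFactorizationColoring {V : Type*} (G : SimpleGraph V) (k : ℕ)
    (c : Sym2 V → Fin k) : Prop :=
  ∀ v : V, ∀ j : Fin k, ∃! e : Sym2 V, e ∈ G.edgeSet ∧ v ∈ e ∧ c e = j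

/-- `G` is `k`-cozy: a connected, `k`-regular graph together with a `1`-factorization
edge coloring by `k` colors. -/
def IsCozy {V : Type*} (G : SimpleGraph V) (k : ℕ) (c : Sym2 V → Fin k) : Prop :=
  G.Connected ∧ (∀ v : V, (G.neighborSet v).ncard = k) ∧ IsOneFactorizationColoring G k c

/-- The edge connectivity of a graph: the least cardinality of a set of edges whose
removal disconnects the graph. -/
noncomputable def edgeConn {V : Type*} (G : SimpleGraph V) : ℕ :=
  sInf {n : ℕ | ∃ D : Set (Sym2 V), D ⊆ G.edgeSet ∧ D.ncard = n ∧
    ¬(G.deleteEdges D).Connected}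


/-! A minimum disconnecting edge set may be taken to be the edge boundary `∂S` of a vertex set
`S`. Each colour class is a perfect matching, i.e. a fixed-point-free involution of the
vertices, so it crosses `∂S` in a number of edges of the same parity as `|S|`. If `|S|` is
even, `|∂S|` is a sum of even numbers; if `|S|` is odd, each of the `k` colours crosses the
cut, so `|∂S| ≥ k`. -/

open Finset Function

namespace Function.Involutive

variable {α : Type*} [DecidableEq α] {σ : α → α}

theorem even_card_of_mapsTo (hσ : Involutive σ) (hfix : ∀ a, σ a ≠ a) {s : Finset α}
    (hs : Set.MapsTo σ s s) : Even #s := by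
  have hfiber : ∀ e ∈ s.image (fun a => s(a, σ a)), #{a ∈ s | s(a, σ a) = e} = 2 := by
    simp only [mem_image]
    rintro _ ⟨a, ha, rfl⟩
    have : {b ∈ s | s(b, σ b) = s(a, σ a)} = {a, σ a} := by
      ext b
      simp only [mem_filter, mem_insert, mem_singleton, Sym2.eq_iff]
      constructor
      · rintro ⟨-, ⟨rfl, -⟩ | ⟨rfl, -⟩⟩ <;> simp
      · rintro (rfl | rfl)
        · simp [ha]
        · exact ⟨hs ha, Or.inr ⟨rfl, hσ a⟩⟩
    rw [this, card_pair (hfix a).symm]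
  rw [card_eq_sum_card_image (fun a => s(a, σ a)) s, sum_congr rfl hfiber, sum_const, smul_eq_mul]
  exact even_two.mul_left _

theorem even_card_iff_even_card_filter_apply_notMem (hσ : Involutive σ) (hfix : ∀ a, σ a ≠ a)
    (s : Finset α) : Even #s ↔ Even #{a ∈ s | σ a ∉ s} := by
  have heven : Even #{a ∈ s | σ a ∈ s} :=
    hσ.even_card_of_mapsTo hfix fun a ha => by simp_all [hσ a]
  rw [← card_filter_add_card_filter_not (fun a => σ a ∈ s), Nat.even_add]
  exact iff_true_left heven

end Function.Involutive

namespace SimpleGraph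

variable {V : Type*} {G : SimpleGraph V}

def edgeBoundary (G : SimpleGraph V) (S : Set V) : Set (Sym2 V) :=
  {e | ∃ a ∈ S, ∃ b ∉ S, G.Adj a b ∧ e = s(a, b)}

lemma edgeBoundary_subset_edgeSet (S : Set V) : G.edgeBoundary S ⊆ G.edgeSet := by
  rintro _ ⟨a, -, b, -, hab, rfl⟩
  exact hab

lemma not_reachable_deleteEdges_edgeBoundary {S : Set V} {u w : V} (hu : u ∈ S) (hw : w ∉ S) :
    ¬(G.deleteEdges (G.edgeBoundary S)).Reachable u w := by
  rintro ⟨p⟩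
  obtain ⟨d, -, hd, hd'⟩ := p.exists_boundary_dart S hu hw
  have hadj := d.adj
  rw [deleteEdges_adj] at hadj
  exact hadj.2 ⟨_, hd, _, hd', hadj.1, rfl⟩

lemma edgeConn_le_ncard_edgeBoundary {S : Set V} {u w : V} (hu : u ∈ S) (hw : w ∉ S) :
    edgeConn G ≤ (G.edgeBoundary S).ncard :=
  Nat.sInf_le ⟨_, edgeBoundary_subset_edgeSet S, rfl,
    fun h => not_reachable_deleteEdges_edgeBoundary hu hw (h.preconnected u w)⟩

lemma edgeBoundary_setOf_reachable_subset (D : Set (Sym2 V)) (u : V) :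
    G.edgeBoundary {v | (G.deleteEdges D).Reachable u v} ⊆ D := by
  rintro _ ⟨a, ha, b, hb, hab, rfl⟩
  by_contra hD
  exact hb (ha.trans (deleteEdges_adj.mpr ⟨hab, hD⟩).reachable)

lemma exists_ncard_edgeBoundary_eq_edgeConn (h : edgeConn G ≠ 0) :
    ∃ S : Set V, ∃ u ∈ S, ∃ w ∉ S, (G.edgeBoundary S).ncard = edgeConn G := by
  obtain ⟨D, -, hD, hdis⟩ :
      ∃ D ⊆ G.edgeSet, D.ncard = edgeConn G ∧ ¬(G.deleteEdges D).Connected :=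
    Nat.sInf_mem (Nat.nonempty_of_pos_sInf (Nat.pos_of_ne_zero h))
  have hDfin : D.Finite := Set.finite_of_ncard_ne_zero (hD ▸ h)
  -- On an empty vertex type `¬Connected` holds vacuously; here `D ≠ ∅` excludes that case.
  obtain ⟨e, -⟩ := Set.nonempty_of_ncard_ne_zero (hD ▸ h)
  have : Nonempty V := ⟨e.out.1⟩
  obtain ⟨u, w, huw⟩ : ∃ u w, ¬(G.deleteEdges D).Reachable u w := by
    simpa [connected_iff, Preconnected] using hdis
  refine ⟨{v | (G.deleteEdges D).Reachable u v}, u, Reachable.refl u, w, huw, ?_⟩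
  exact le_antisymm (hD ▸ Set.ncard_le_ncard (edgeBoundary_setOf_reachable_subset D u) hDfin)
    (edgeConn_le_ncard_edgeBoundary (Reachable.refl u) huw)

end SimpleGraph

namespace IsOneFactorizationColoring

variable {V : Type*} {G : SimpleGraph V} {k : ℕ} {c : Sym2 V → Fin k}

theorem exists_partner (hc : IsOneFactorizationColoring G k c) (j : Fin k) :
    ∃ σ : V → V, ∀ v w, G.Adj v w ∧ c s(v, w) = j ↔ w = σ v := by
  choose e he using fun v => (hc v j).exists
  refine ⟨fun v => Sym2.Mem.other (he v).2.1, fun v w => ⟨fun ⟨hvw, hj⟩ => ?_, ?_⟩⟩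
  · have : s(v, w) = e v := (hc v j).unique ⟨hvw, Sym2.mem_mk_left v w, hj⟩ (he v)
    rw [← Sym2.other_spec (he v).2.1] at this
    exact Sym2.congr_right.mp this
  · rintro rfl
    rw [← mem_edgeSet, Sym2.other_spec (he v).2.1]
    exact ⟨(he v).1, (he v).2.2⟩

theorem even_card_iff_even_ncard_edgeBoundary_color (hc : IsOneFactorizationColoring G k c)
    (j : Fin k) (S : Finset V) :
    Even #S ↔ Even {e ∈ G.edgeBoundary S | c e = j}.ncard := by
  classical
  obtain ⟨σ, hσ⟩ := hc.exists_partner j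
  have hadj v : G.Adj v (σ v) ∧ c s(v, σ v) = j := (hσ v _).mpr rfl
  have hinv : Involutive σ := fun v =>
    ((hσ (σ v) v).mp ⟨(hadj v).1.symm, Sym2.eq_swap ▸ (hadj v).2⟩).symm
  have himage : {e ∈ G.edgeBoundary S | c e = j} =
      (fun v => s(v, σ v)) '' ↑{v ∈ S | σ v ∉ S} := by
    ext e
    simp only [Set.mem_ofPred_eq, Set.mem_image, coe_filter]
    constructor
    · rintro ⟨⟨a, ha, b, hb, hab, rfl⟩, hj⟩
      obtain rfl := (hσ a b).mp ⟨hab, hj⟩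
      exact ⟨a, ⟨ha, hb⟩, rfl⟩
    · rintro ⟨v, ⟨hv, hσv⟩, rfl⟩
      exact ⟨⟨v, hv, σ v, hσv, (hadj v).1, rfl⟩, (hadj v).2⟩
  have hinj : Set.InjOn (fun v => s(v, σ v)) ↑{v ∈ S | σ v ∉ S} := by
    intro v hv w hw hvw
    simp only [coe_filter, Set.mem_ofPred_eq] at hv hw
    rcases Sym2.eq_iff.mp hvw with ⟨h, -⟩ | ⟨-, rfl⟩
    · exact h
    · exact absurd hw.1 hv.2
  rw [himage, hinj.ncard_image, Set.ncard_coe_finset]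
  exact hinv.even_card_iff_even_card_filter_apply_notMem (fun v => (hadj v).1.ne') S

theorem even_or_le_ncard_edgeBoundary [Finite V] (hc : IsOneFactorizationColoring G k c)
    (S : Set V) : Even (G.edgeBoundary S).ncard ∨ k ≤ (G.edgeBoundary S).ncard := by
  lift S to Finset V using S.toFinite
  have hsum : (G.edgeBoundary S).ncard = ∑ j, {e ∈ G.edgeBoundary S | c e = j}.ncard := by
    classical
    have := Fintype.ofFinite V
    simp only [Set.ncard_eq_toFinset_card']
    rw [card_eq_sum_card_fiberwise (fun e _ => mem_univ (c e))]
    refine sum_congr rfl fun j _ => congrArg card ?_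
    ext
    simp
  have hpar := (hc.even_card_iff_even_ncard_edgeBoundary_color · S)
  rw [hsum]
  by_cases hS : Even #S
  · exact Or.inl (even_sum _ fun j _ => (hpar j).mp hS)
  · refine Or.inr ?_
    calc k = ∑ _j : Fin k, 1 := by simp
      _ ≤ _ := sum_le_sum fun j _ => (Nat.not_even_iff_odd.mp ((hpar j).not.mp hS)).pos

end IsOneFactorizationColoring

/-- If the edge connectivity of a finite `k`-cozy graph is less than `k`, then it is even. -/
theorem edgeConn_even_of_lt {V : Type*} [Fintype V] (G : SimpleGraph V) (k : ℕ)
    (c : Sym2 V → Fin k) (hG : IsCozy G k c) (hlt : edgeConn G < k) :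
    Even (edgeConn G) := by
  obtain ⟨-, -, hc⟩ := hG
  by_cases h0 : edgeConn G = 0
  · exact h0 ▸ Even.zero
  obtain ⟨S, -, -, -, -, hS⟩ := exists_ncard_edgeBoundary_eq_edgeConn h0
  have := hc.even_or_le_ncard_edgeBoundary S
  rw [hS] at this
  exact this.resolve_right hlt.not_ge
end

section
/- Let G = (V, E) be a finite k-cozy graph with edge connectivity λ(G) = 2ℓ, and let D ⊆ E be a set of edges with |D| = 2ℓ whose removal disconnects G into two connected components G₁ and G₂. Let V₁ and V₂ be multisets of vertices of one of the components (either both from G₁ or both from G₂) with |V₁| = |V₂| = q where q ≤ ℓ. Then there exist q pairwise edge-disjoint paths in G connecting V₁ and V₂ with multiplicities preserved: the multiset of starting vertices of the paths equals V₁ and the multiset of ending vertices equals V₂, so every vertex of V₁ and of V₂ (counted with multiplicity) is an endpoint of some such path. -/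
open SimpleGraph

/-!
Every edge cut of `G` has at least `2ℓ ≥ q` edges, so this is Menger's theorem for edge-disjoint
paths between multisets. A unit-capacity flow from `S` to `T` is grown one unit at a time along
residual paths (Ford–Fulkerson); when no residual path joins an unused source to an unused sink,
the vertices reachable from the unused sources span a cut with fewer than `q` edges. The final
flow splits into `q` walks using distinct edges, and shortening each walk to a path keeps them
edge-disjoint.
-/

open Finset Relation

lemma Relation.ReflTransGen.exists_head_avoiding {α : Type*} {r : α → α → Prop} {a b : α}
    (h : ReflTransGen r a b) (hab : a ≠ b) :
    ∃ c, r a c ∧ c ≠ a ∧ ReflTransGen (fun x y => r x y ∧ x ≠ a ∧ y ≠ a) c b := by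
  induction h with
  | refl => exact absurd rfl hab
  | @tail b c _ hbc ih =>
    by_cases hb : b = a
    · subst hb
      exact ⟨c, hbc, hab.symm, .refl⟩
    · obtain ⟨z, haz, hza, hzb⟩ := ih (Ne.symm hb)
      exact ⟨z, haz, hza, hzb.tail ⟨hbc, hb, hab.symm⟩⟩

namespace SimpleGraph

variable {V : Type*} {G : SimpleGraph V} {F : Finset (V × V)}

/-- The residual graph of `F`: unused edges in either direction, and used darts reversed. -/
def ResidualAdj (G : SimpleGraph V) (F : Finset (V × V)) (x y : V) : Prop :=
  (G.Adj x y ∧ (x, y) ∉ F ∧ (y, x) ∉ F) ∨ (y, x) ∈ F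

lemma ResidualAdj.of_agree {F' : Finset (V × V)} {y a b : V}
    (hF : ∀ u v, u ≠ y → v ≠ y → ((u, v) ∈ F' ↔ (u, v) ∈ F)) (ha : a ≠ y) (hb : b ≠ y)
    (h : G.ResidualAdj F a b) : G.ResidualAdj F' a b := by
  rwa [ResidualAdj, hF a b ha hb, hF b a hb ha]

lemma edgeConn_le_card_of_cut_subset {D : Finset (Sym2 V)} (hD : ∀ e ∈ D, e ∈ G.edgeSet)
    {A : Set V} {a b : V} (ha : a ∈ A) (hb : b ∉ A)
    (hcross : ∀ x ∈ A, ∀ y ∉ A, G.Adj x y → s(x, y) ∈ D) :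
    edgeConn G ≤ #D := by
  refine Nat.sInf_le ⟨D, hD, Set.ncard_coe_finset D, fun hconn => ?_⟩
  obtain ⟨p⟩ := hconn.preconnected a b
  obtain ⟨d, -, hd₁, hd₂⟩ := p.exists_boundary_dart A ha hb
  have hadj := (deleteEdges_adj ..).1 d.adj
  exact hadj.2 (hcross _ hd₁ _ hd₂ hadj.1)

section Flow

variable [DecidableEq V]

def outdeg (F : Finset (V × V)) (v : V) : ℕ := #{d ∈ F | d.1 = v}

def indeg (F : Finset (V × V)) (v : V) : ℕ := #{d ∈ F | d.2 = v}

lemma outdeg_insert {d : V × V} (h : d ∉ F) (v : V) :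
    outdeg (insert d F) v = outdeg F v + if v = d.1 then 1 else 0 := by
  simp only [outdeg, filter_insert]
  split_ifs <;> simp_all [card_insert_of_notMem, eq_comm]

lemma indeg_insert {d : V × V} (h : d ∉ F) (v : V) :
    indeg (insert d F) v = indeg F v + if v = d.2 then 1 else 0 := by
  simp only [indeg, filter_insert]
  split_ifs <;> simp_all [card_insert_of_notMem, eq_comm]

lemma outdeg_erase {d : V × V} (h : d ∈ F) (v : V) :
    outdeg F v = outdeg (F.erase d) v + if v = d.1 then 1 else 0 := by
  simpa [insert_erase h] using outdeg_insert (notMem_erase d F) v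

lemma indeg_erase {d : V × V} (h : d ∈ F) (v : V) :
    indeg F v = indeg (F.erase d) v + if v = d.2 then 1 else 0 := by
  simpa [insert_erase h] using indeg_insert (notMem_erase d F) v

lemma sum_outdeg (A : Finset V) :
    ∑ v ∈ A, outdeg F v = #{d ∈ F | d.1 ∈ A} := by
  simp only [outdeg, card_filter]
  rw [sum_comm]
  exact sum_congr rfl fun d _ => sum_ite_eq A d.1 fun _ => 1

lemma sum_indeg (A : Finset V) :
    ∑ v ∈ A, indeg F v = #{d ∈ F | d.2 ∈ A} := by
  simp only [indeg, card_filter]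
  rw [sum_comm]
  exact sum_congr rfl fun d _ => sum_ite_eq A d.2 fun _ => 1

/-- `F` is the set of darts carrying one unit of flow from the sources `S` to the sinks `T`,
both counted with multiplicity; an edge carries flow in at most one direction. -/
structure IsUnitFlow (G : SimpleGraph V) (F : Finset (V × V)) (S T : Multiset V) : Prop where
  adj : ∀ d ∈ F, G.Adj d.1 d.2
  asymm : ∀ u v, (u, v) ∈ F → (v, u) ∉ F
  conserve : ∀ v, outdeg F v + T.count v = indeg F v + S.count v

variable {S T : Multiset V}

lemma isUnitFlow_empty : G.IsUnitFlow ∅ 0 0 :=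
  ⟨by simp, by simp, by simp [outdeg, indeg]⟩

lemma isUnitFlow_cons_cons {s : V} :
    G.IsUnitFlow F (s ::ₘ S) (s ::ₘ T) ↔ G.IsUnitFlow F S T := by
  refine ⟨fun hf => ⟨hf.adj, hf.asymm, fun v => ?_⟩, fun hf => ⟨hf.adj, hf.asymm, fun v => ?_⟩⟩
  · have := hf.conserve v
    simp only [Multiset.count_cons] at this
    omega
  · have := hf.conserve v
    simp only [Multiset.count_cons]
    omega

lemma IsUnitFlow.insert_dart {a b : V} (hf : G.IsUnitFlow F S T) (hab : G.Adj a b)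
    (hab_nmem : (a, b) ∉ F) (hba_nmem : (b, a) ∉ F) :
    G.IsUnitFlow (insert (a, b) F) (a ::ₘ S) (b ::ₘ T) where
  adj d hd := by
    rcases mem_insert.1 hd with rfl | hd
    exacts [hab, hf.adj d hd]
  asymm u v huv hvu := by
    simp only [mem_insert, Prod.mk.injEq] at huv hvu
    rcases huv with ⟨rfl, rfl⟩ | huv
    · rcases hvu with ⟨rfl, -⟩ | hvu
      exacts [hab.ne rfl, hba_nmem hvu]
    · rcases hvu with ⟨rfl, rfl⟩ | hvu
      exacts [hba_nmem huv, hf.asymm u v huv hvu]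
  conserve v := by
    have := hf.conserve v
    rw [outdeg_insert hab_nmem, indeg_insert hab_nmem]
    simp only [Multiset.count_cons]
    split_ifs <;> omega

lemma IsUnitFlow.erase_dart {a b : V} (hf : G.IsUnitFlow F S T) (hab : (a, b) ∈ F) :
    G.IsUnitFlow (F.erase (a, b)) (b ::ₘ S) (a ::ₘ T) where
  adj d hd := hf.adj d (mem_of_mem_erase hd)
  asymm u v huv hvu := hf.asymm u v (mem_of_mem_erase huv) (mem_of_mem_erase hvu)
  conserve v := by
    have := hf.conserve v
    rw [outdeg_erase hab, indeg_erase hab] at this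
    simp only [Multiset.count_cons]
    split_ifs at this ⊢ <;> omega

lemma IsUnitFlow.cut_balance (hf : G.IsUnitFlow F S T) (A : Finset V) :
    #{d ∈ F | d.1 ∈ A ∧ d.2 ∉ A} + ∑ v ∈ A, T.count v =
      #{d ∈ F | d.1 ∉ A ∧ d.2 ∈ A} + ∑ v ∈ A, S.count v := by
  have h := sum_congr rfl fun v (_ : v ∈ A) => hf.conserve v
  rw [sum_add_distrib, sum_add_distrib, sum_outdeg, sum_indeg] at h
  have hout := card_filter_add_card_filter_not (s := {d ∈ F | d.1 ∈ A}) (p := fun d => d.2 ∈ A)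
  have hin := card_filter_add_card_filter_not (s := {d ∈ F | d.2 ∈ A}) (p := fun d => d.1 ∈ A)
  simp only [filter_filter] at hout hin
  have hboth : #{d ∈ F | d.2 ∈ A ∧ d.1 ∈ A} = #{d ∈ F | d.1 ∈ A ∧ d.2 ∈ A} := by
    simp only [and_comm]
  have hin' : #{d ∈ F | d.2 ∈ A ∧ d.1 ∉ A} = #{d ∈ F | d.1 ∉ A ∧ d.2 ∈ A} := by
    simp only [and_comm]
  omega

lemma IsUnitFlow.card_eq [Fintype V] (hf : G.IsUnitFlow F S T) :
    Multiset.card S = Multiset.card T := by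
  simpa using (hf.cut_balance univ).symm

lemma IsUnitFlow.exists_push {y z : V} (hf : G.IsUnitFlow F S (y ::ₘ T))
    (h : G.ResidualAdj F y z) :
    ∃ F', G.IsUnitFlow F' S (z ::ₘ T) ∧
      ∀ u v, u ≠ y → v ≠ y → ((u, v) ∈ F' ↔ (u, v) ∈ F) := by
  rcases h with ⟨hyz, hyz', hzy⟩ | hzy
  · refine ⟨insert (y, z) F, ?_, fun u v hu _ => by simp [hu]⟩
    rw [← isUnitFlow_cons_cons (s := y), Multiset.cons_swap]
    exact hf.insert_dart hyz hyz' hzy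
  · refine ⟨F.erase (z, y), ?_, fun u v _ hv => by simp [hv]⟩
    rw [← isUnitFlow_cons_cons (s := y), Multiset.cons_swap]
    exact hf.erase_dart hzy

/-- `U` is the induction measure: after pushing along the first residual dart `y → z`, the
rest of the path can be chosen inside `U.erase y`, where the residual graph is unchanged. -/
lemma IsUnitFlow.exists_move_sink (U : Finset V) {y t : V}
    (hf : G.IsUnitFlow F S (y ::ₘ T))
    (h : ReflTransGen (fun a b => G.ResidualAdj F a b ∧ a ∈ U ∧ b ∈ U) y t) :
    ∃ F', G.IsUnitFlow F' S (t ::ₘ T) := by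
  induction U using Finset.strongInduction generalizing F y with
  | H U ih =>
  rcases eq_or_ne y t with rfl | hyt
  · exact ⟨F, hf⟩
  obtain ⟨z, ⟨hyz, hyU, -⟩, hzy, hzt⟩ := h.exists_head_avoiding hyt
  obtain ⟨F', hf', hF'⟩ := hf.exists_push hyz
  refine ih (U.erase y) (erase_ssubset hyU) hf' (ReflTransGen.mono ?_ _ _ hzt)
  rintro a b ⟨⟨hab, haU, hbU⟩, hay, hby⟩
  exact ⟨hab.of_agree hF' hay hby, mem_erase.2 ⟨hay, haU⟩, mem_erase.2 ⟨hby, hbU⟩⟩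

/-- Either an unused source reaches an unused sink in the residual graph, and the flow grows
along that path, or the set `A` of vertices reachable from unused sources is closed: every edge
leaving `A` then carries flow out of `A` and none comes back, so the cut at `A` has fewer than
`|S|` edges. -/
lemma IsUnitFlow.exists_augment [Fintype V] {q : ℕ} {S₀ T₀ : Multiset V}
    (hq : q ≤ edgeConn G) (hf : G.IsUnitFlow F S₀ T₀) (hS : S₀ < S) (hT : T₀ < T)
    (hSq : Multiset.card S ≤ q) :
    ∃ F' s t, G.IsUnitFlow F' (s ::ₘ S₀) (t ::ₘ T₀) ∧ s ::ₘ S₀ ≤ S ∧ t ::ₘ T₀ ≤ T := by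
  classical
  obtain ⟨s, hs⟩ := Multiset.lt_iff_cons_le.1 hS
  obtain ⟨t, ht⟩ := Multiset.lt_iff_cons_le.1 hT
  let A : Finset V := {x | ∃ s', s' ::ₘ S₀ ≤ S ∧ ReflTransGen (G.ResidualAdj F) s' x}
  by_cases htA : t ∈ A
  · obtain ⟨s', hs', hreach⟩ := (mem_filter.1 htA).2
    obtain ⟨F', hf'⟩ := (isUnitFlow_cons_cons.2 hf).exists_move_sink univ
      (ReflTransGen.mono (fun a b h => ⟨h, mem_univ a, mem_univ b⟩) _ _ hreach)
    exact ⟨F', s', t, hf', hs', ht⟩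
  exfalso
  have hclosed : ∀ x ∈ A, ∀ y, G.ResidualAdj F x y → y ∈ A := by
    intro x hx y hxy
    obtain ⟨s', hs', hreach⟩ := (mem_filter.1 hx).2
    exact mem_filter.2 ⟨mem_univ y, s', hs', hreach.tail hxy⟩
  have hout : edgeConn G ≤ #{d ∈ F | d.1 ∈ A ∧ d.2 ∉ A} := by
    refine (edgeConn_le_card_of_cut_subset (A := A) (a := s) ?_ ?_ htA ?_).trans
      (card_image_le (f := fun d : V × V => s(d.1, d.2)))
    · simp only [mem_image, mem_filter]
      rintro _ ⟨d, ⟨hd, -⟩, rfl⟩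
      exact hf.adj d hd
    · exact mem_filter.2 ⟨mem_univ s, s, hs, .refl⟩
    · intro x hx y hy hxy
      have hxyF : (x, y) ∈ F := by
        by_contra hxyF
        refine hy (hclosed x hx y (Or.inl ⟨hxy, hxyF, fun hyx => hy ?_⟩))
        exact hclosed x hx y (Or.inr hyx)
      exact mem_image.2 ⟨(x, y), mem_filter.2 ⟨hxyF, hx, hy⟩, rfl⟩
  have hin : #{d ∈ F | d.1 ∉ A ∧ d.2 ∈ A} = 0 :=
    card_eq_zero.2 <| filter_eq_empty_iff.2 fun d hd h => h.1 (hclosed d.2 h.2 d.1 (Or.inr hd))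
  have hSA : ∑ v ∈ A, S₀.count v ≤ Multiset.card S₀ :=
    calc ∑ v ∈ A, S₀.count v ≤ ∑ v, S₀.count v := sum_le_sum_of_subset (subset_univ A)
      _ = Multiset.card S₀ := Multiset.sum_count_eq_card fun a _ => mem_univ a
  have hS₀ := Multiset.card_lt_card hS
  have := hf.cut_balance A
  omega

lemma exists_isUnitFlow [Fintype V] {q : ℕ} (hq : q ≤ edgeConn G)
    (hS : Multiset.card S = q) (hT : Multiset.card T = q) : ∃ F, G.IsUnitFlow F S T := by
  suffices ∀ m ≤ q, ∃ F S₀ T₀, G.IsUnitFlow F S₀ T₀ ∧ S₀ ≤ S ∧ T₀ ≤ T ∧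
      Multiset.card S₀ = m by
    obtain ⟨F, S₀, T₀, hf, hS₀, hT₀, hm⟩ := this q le_rfl
    obtain rfl := Multiset.eq_of_le_of_card_le hS₀ (by omega)
    obtain rfl := Multiset.eq_of_le_of_card_le hT₀ (by rw [← hf.card_eq]; omega)
    exact ⟨F, hf⟩
  intro m hm
  induction m with
  | zero => exact ⟨∅, 0, 0, isUnitFlow_empty, Multiset.zero_le S, Multiset.zero_le T, rfl⟩
  | succ m ih =>
    obtain ⟨F, S₀, T₀, hf, hS₀, hT₀, rfl⟩ := ih (by omega)
    have hS₀' : S₀ < S := hS₀.lt_of_ne (by rintro rfl; omega)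
    have hT₀' : T₀ < T := hT₀.lt_of_ne (by rintro rfl; have := hf.card_eq; omega)
    obtain ⟨F', s, t, hf', hs, ht⟩ := hf.exists_augment hq hS₀' hT₀' hS.le
    exact ⟨F', _, _, hf', hs, ht, by simp⟩

lemma IsUnitFlow.nodup_edges (hf : G.IsUnitFlow F S T) :
    (F.val.map fun d => s(d.1, d.2)).Nodup := by
  refine Multiset.Nodup.map_on (fun d hd d' hd' h => ?_) F.nodup
  rcases Sym2.eq_iff.1 h with ⟨h₁, h₂⟩ | ⟨h₁, h₂⟩
  · exact Prod.ext h₁ h₂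
  · exact absurd (h₁ ▸ h₂ ▸ hd') (hf.asymm d.1 d.2 hd)

lemma IsUnitFlow.exists_out_dart {s : V} (hf : G.IsUnitFlow F (s ::ₘ S) T) (hs : s ∉ T) :
    ∃ u, (s, u) ∈ F := by
  have h := hf.conserve s
  rw [Multiset.count_cons_self, Multiset.count_eq_zero.2 hs] at h
  obtain ⟨d, hd⟩ := card_pos.1 (show 0 < outdeg F s by omega)
  obtain ⟨hdF, rfl⟩ := mem_filter.1 hd
  exact ⟨d.2, hdF⟩

/-- Induction on `|S| + |F|`: a source that is also a sink gives a trivial walk; otherwise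
remove a flow dart `(s, u)` leaving it and prepend it to the walk that then starts at `u`. -/
lemma IsUnitFlow.exists_walks [Fintype V] (hf : G.IsUnitFlow F S T) :
    ∃ W : Multiset (Σ p : V × V, G.Walk p.1 p.2), W.map (·.1.1) = S ∧ W.map (·.1.2) = T ∧
      W.bind (fun w => ↑w.2.edges) ≤ F.val.map fun d => s(d.1, d.2) := by
  induction hn : Multiset.card S + #F using Nat.strong_induction_on generalizing F S T with
  | _ n ih =>
  rcases Multiset.empty_or_exists_mem S with rfl | ⟨s, hs⟩
  · have hT : T = 0 := Multiset.card_eq_zero.1 (by rw [← hf.card_eq]; rfl)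
    exact ⟨0, by simp, by simp [hT], by simp⟩
  obtain ⟨S₁, rfl⟩ := Multiset.exists_cons_of_mem hs
  by_cases hsT : s ∈ T
  · obtain ⟨T₁, rfl⟩ := Multiset.exists_cons_of_mem hsT
    obtain ⟨W, hWS, hWT, hWF⟩ :=
      ih _ (by simp only [Multiset.card_cons] at hn; omega) (isUnitFlow_cons_cons.1 hf) rfl
    exact ⟨⟨(s, s), .nil⟩ ::ₘ W, by simp [hWS], by simp [hWT], by simpa using hWF⟩
  obtain ⟨u, hsu⟩ := hf.exists_out_dart hsT
  have hf' : G.IsUnitFlow (F.erase (s, u)) (u ::ₘ S₁) T := by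
    rw [← isUnitFlow_cons_cons (s := s), Multiset.cons_swap]
    exact hf.erase_dart hsu
  obtain ⟨W, hWS, hWT, hWF⟩ := ih _ (by
    have := card_erase_add_one hsu
    simp only [Multiset.card_cons] at hn ⊢
    omega) hf' rfl
  obtain ⟨⟨⟨u', b⟩, w⟩, hw, hu⟩ := Multiset.mem_map.1 (hWS ▸ Multiset.mem_cons_self u S₁)
  obtain rfl : u = u' := hu.symm
  obtain ⟨W₁, rfl⟩ := Multiset.exists_cons_of_mem hw
  have hF : (F.val.map fun d => s(d.1, d.2)) =
      s(s, u) ::ₘ (F.erase (s, u)).val.map fun d => s(d.1, d.2) := by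
    conv_lhs => rw [← Multiset.cons_erase (s := F.val) hsu]
    rw [Multiset.map_cons, erase_val]
  refine ⟨⟨(s, b), .cons (hf.adj (s, u) hsu) w⟩ ::ₘ W₁, ?_, by simpa using hWT, ?_⟩
  · simpa using hWS
  · simp only [Multiset.cons_bind, Walk.edges_cons] at hWF ⊢
    rw [hF, ← Multiset.cons_coe, Multiset.cons_add]
    exact Multiset.cons_le_cons _ hWF

end Flow

lemma exists_paths_of_pairwise_disjoint (L : List (Σ p : V × V, G.Walk p.1 p.2))
    (hL : L.Pairwise fun w w' => w.2.edges.Disjoint w'.2.edges) :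
    ∃ (a b : Fin L.length → V) (P : ∀ i, G.Walk (a i) (b i)), (∀ i, (P i).IsPath) ∧
      (∀ i j, i ≠ j → ∀ e, e ∈ (P i).edges → e ∉ (P j).edges) ∧
      univ.val.map a = ↑(L.map (·.1.1)) ∧ univ.val.map b = ↑(L.map (·.1.2)) := by
  classical
  have hdisj : ∀ i j : Fin L.length, i < j →
      ∀ e ∈ (L.get i).2.bypass.edges, e ∉ (L.get j).2.bypass.edges :=
    fun i j hij e hi hj =>
      hL.rel_get_of_lt hij (Walk.edges_bypass_subset_edges _ hi)
        (Walk.edges_bypass_subset_edges _ hj)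
  refine ⟨fun i => (L.get i).1.1, fun i => (L.get i).1.2, fun i => (L.get i).2.bypass,
    fun i => Walk.bypass_isPath _, fun i j hij e hi hj => ?_,
    by rw [Fin.univ_val_map]; exact congrArg _ (List.ofFn_getElem_eq_map L (·.1.1)),
    by rw [Fin.univ_val_map]; exact congrArg _ (List.ofFn_getElem_eq_map L (·.1.2))⟩
  rcases hij.lt_or_gt with h | h
  exacts [hdisj i j h e hi hj, hdisj j i h e hj hi]

theorem exists_edgeDisjoint_paths_of_le_edgeConn [Fintype V] {q : ℕ} (hq : q ≤ edgeConn G)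
    {S T : Multiset V} (hS : Multiset.card S = q) (hT : Multiset.card T = q) :
    ∃ (a b : Fin q → V) (P : ∀ i, G.Walk (a i) (b i)), (∀ i, (P i).IsPath) ∧
      (∀ i j, i ≠ j → ∀ e, e ∈ (P i).edges → e ∉ (P j).edges) ∧
      univ.val.map a = S ∧ univ.val.map b = T := by
  classical
  obtain ⟨F, hf⟩ := exists_isUnitFlow hq hS hT
  obtain ⟨W, hWS, hWT, hWF⟩ := hf.exists_walks
  have hL : W.toList.Pairwise fun w w' => w.2.edges.Disjoint w'.2.edges := by
    have hnodup := Multiset.nodup_of_le hWF hf.nodup_edges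
    rw [← Multiset.coe_toList W, Multiset.coe_bind, Multiset.coe_nodup] at hnodup
    exact (List.nodup_flatMap.1 hnodup).2
  obtain ⟨a, b, P, hP, hPdisj, ha, hb⟩ := exists_paths_of_pairwise_disjoint W.toList hL
  obtain rfl : W.toList.length = q := by
    rw [Multiset.length_toList, ← hS, ← hWS, Multiset.card_map]
  rw [← Multiset.map_coe, Multiset.coe_toList] at ha hb
  exact ⟨a, b, P, hP, hPdisj, ha.trans hWS, hb.trans hWT⟩

end SimpleGraph

theorem edge_disjoint_paths_between_multisets_general {V : Type*} [Fintype V]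
    (G : SimpleGraph V) (ℓ q : ℕ)
    (hec : edgeConn G = 2 * ℓ)
    (S T : Multiset V)
    (hScard : Multiset.card S = q) (hTcard : Multiset.card T = q) (hq : q ≤ ℓ) :
    ∃ (a b : Fin q → V) (P : ∀ i : Fin q, G.Walk (a i) (b i)),
      (∀ i, (P i).IsPath) ∧
      (∀ i j, i ≠ j → ∀ e, e ∈ (P i).edges → e ∉ (P j).edges) ∧
      (Finset.univ.val.map a = S) ∧ (Finset.univ.val.map b = T) :=
  G.exists_edgeDisjoint_paths_of_le_edgeConn (by omega) hScard hTcard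

/-- Let `G` be a finite `k`-cozy graph with edge connectivity `2ℓ`, and let `D` be a set of
`2ℓ` edges whose removal disconnects `G` into two connected components on vertex sets
`V₁` and `V₂`. If `S` and `T` are multisets of vertices of one of the components
(say the one on `W`, with `W = V₁` or `W = V₂`) with `|S| = |T| = q ≤ ℓ`, then there are
`q` pairwise edge-disjoint paths in `G` whose starting vertices form exactly the multiset
`S` and whose ending vertices form exactly the multiset `T`. -/
theorem edge_disjoint_paths_between_multisets {V : Type*} [Fintype V]
    (G : SimpleGraph V) (k ℓ q : ℕ)
    (c : Sym2 V → Fin k) (hG : IsCozy G k c)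
    (hec : edgeConn G = 2 * ℓ)
    (D : Set (Sym2 V)) (hD : D ⊆ G.edgeSet) (hDcard : D.ncard = 2 * ℓ)
    (V₁ V₂ : Set V) (hdisj : Disjoint V₁ V₂) (hcover : V₁ ∪ V₂ = Set.univ)
    (hne₁ : V₁.Nonempty) (hne₂ : V₂.Nonempty)
    (hG₁ : ((G.deleteEdges D).induce V₁).Connected)
    (hG₂ : ((G.deleteEdges D).induce V₂).Connected)
    (hsep : ∀ a ∈ V₁, ∀ b ∈ V₂, ¬(G.deleteEdges D).Adj a b)
    (W : Set V) (hW : W = V₁ ∨ W = V₂)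
    (S T : Multiset V) (hS : ∀ x ∈ S, x ∈ W) (hT : ∀ x ∈ T, x ∈ W)
    (hScard : Multiset.card S = q) (hTcard : Multiset.card T = q) (hq : q ≤ ℓ) :
    ∃ (a b : Fin q → V) (P : ∀ i : Fin q, G.Walk (a i) (b i)),
      (∀ i, (P i).IsPath) ∧
      (∀ i j, i ≠ j → ∀ e, e ∈ (P i).edges → e ∉ (P j).edges) ∧
      (Finset.univ.val.map a = S) ∧ (Finset.univ.val.map b = T) :=
  edge_disjoint_paths_between_multisets_general G ℓ q hec S T hScard hTcard hq
end

section
/- The N-fold I-sum does not in general preserve total unimodularity: there exists a totally unimodular 3 × 4 matrix A with entries in {−1, 0, 1} (for example, A with rows (0, 1, −1, 1), (1, 0, 1, 0), (1, 1, 0, 0)) such that its 2-fold I-sum, the 10 × 8 matrix with a top block row consisting of two copies of the 4 × 4 identity matrix and below it the block diagonal matrix with two copies of A, is not totally unimodular. -/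
/-!
Since `A` has three rows, its total unimodularity is a finite check of its minors of order at
most three. In the `2`-fold `I`-sum the identity rows couple the two copies of `A`: two identity
rows together with two rows from each copy give a `6 × 6` submatrix in which every row and every
column has exactly two nonzero entries. Such a matrix is a signed cycle, with determinant
`±1 ± 1`, and here the two terms add up to `2`.
-/

open Matrix

/-- The `N`-fold `I`-sum of an `m × n` matrix `A`: the `(mN + n) × (nN)` matrix whose top
`n` rows consist of `N` horizontally concatenated copies of the `n × n` identity matrix,
and whose remaining `mN` rows form the block diagonal matrix with `N` copies of `A`. -/
def ISum {m n : ℕ} (N : ℕ) (A : Matrix (Fin m) (Fin n) ℚ) :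
    Matrix (Fin n ⊕ (Fin N × Fin m)) (Fin N × Fin n) ℚ :=
  fun i j =>
    match i with
    | Sum.inl r => if r = j.2 then 1 else 0
    | Sum.inr (t, r) => if t = j.1 then A r j.2 else 0

namespace Matrix

variable {ι m n R : Type*} [CommRing R]

lemma neg_mem_range_signType_cast {x : R} (hx : x ∈ Set.range (SignType.cast : SignType → R)) :
    -x ∈ Set.range (SignType.cast : SignType → R) := by
  obtain ⟨s, rfl⟩ := hx
  exact ⟨-s, by simp⟩

lemma det_submatrix_mem_range_signType_of_injective [Fintype ι] [DecidableEq ι]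
    (A : Matrix ι n R) {f : ι → ι} (hf : f.Injective) (g : ι → n)
    (h : (A.submatrix id g).det ∈ Set.range SignType.cast) :
    (A.submatrix f g).det ∈ Set.range SignType.cast := by
  set σ := Equiv.ofBijective f (Finite.injective_iff_bijective.mp hf)
  have hσ : A.submatrix f g = (A.submatrix id g).submatrix σ id := rfl
  rw [hσ, det_permute]
  rcases Int.units_eq_one_or (Equiv.Perm.sign σ) with hs | hs <;> rw [hs]
  · simpa using h
  · simpa using neg_mem_range_signType_cast h

lemma isTotallyUnimodular_of_forall_lt_of_forall_submatrix_id {k : ℕ} (A : Matrix (Fin k) n R)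
    (hlt : ∀ l < k, ∀ (f : Fin l → Fin k) (g : Fin l → n),
      (A.submatrix f g).det ∈ Set.range SignType.cast)
    (hid : ∀ g : Fin k → n, (A.submatrix id g).det ∈ Set.range SignType.cast) :
    A.IsTotallyUnimodular := by
  intro l f g hf _
  obtain hl | rfl | hl := lt_trichotomy l k
  · exact hlt l hl f g
  · exact det_submatrix_mem_range_signType_of_injective A hf g (hid g)
  · simpa using (Fintype.card_le_of_injective f hf).not_gt (by simpa using hl)

lemma not_isTotallyUnimodular_of_det_submatrix_eq_two [CharZero R] {k : ℕ} (A : Matrix m n R)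
    (f : Fin k → m) (g : Fin k → n) (h : (A.submatrix f g).det = 2) :
    ¬A.IsTotallyUnimodular := by
  rw [isTotallyUnimodular_iff]
  intro hA
  obtain ⟨s, hs⟩ := hA k f g
  cases s <;> norm_num [h] at hs

end Matrix

def counterexampleMatrix : Matrix (Fin 3) (Fin 4) ℚ := !![0, 1, -1, 1; 1, 0, 1, 0; 1, 1, 0, 0]

lemma counterexampleMatrix_isTotallyUnimodular : counterexampleMatrix.IsTotallyUnimodular := by
  refine isTotallyUnimodular_of_forall_lt_of_forall_submatrix_id _ (fun k hk f g => ?_)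
    (fun g => ?_) <;> rw [SignType.range_eq]
  · interval_cases k
    · simp
    · rw [det_fin_one]
      simp only [submatrix_apply]
      generalize f 0 = i; generalize g 0 = j
      fin_cases i <;> fin_cases j <;> simp [counterexampleMatrix]
    · rw [det_fin_two]
      simp only [submatrix_apply]
      generalize f 0 = i₀; generalize f 1 = i₁; generalize g 0 = j₀; generalize g 1 = j₁
      fin_cases i₀ <;> fin_cases i₁ <;> fin_cases j₀ <;> fin_cases j₁ <;>
        norm_num [counterexampleMatrix]
  · rw [det_fin_three]
    simp only [submatrix_apply, id_eq]
    generalize g 0 = j₀; generalize g 1 = j₁; generalize g 2 = j₂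
    fin_cases j₀ <;> fin_cases j₁ <;> fin_cases j₂ <;> norm_num [counterexampleMatrix, cons_val_two]

lemma det_submatrix_iSum_two_counterexampleMatrix :
    ((ISum 2 counterexampleMatrix).submatrix
      ![.inl 0, .inl 3, .inr (0, 0), .inr (0, 1), .inr (1, 0), .inr (1, 2)]
      ![(0, 0), (0, 2), (0, 3), (1, 0), (1, 1), (1, 3)]).det = 2 := by
  have hM : (ISum 2 counterexampleMatrix).submatrix
      ![.inl 0, .inl 3, .inr (0, 0), .inr (0, 1), .inr (1, 0), .inr (1, 2)]
      ![(0, 0), (0, 2), (0, 3), (1, 0), (1, 1), (1, 3)] =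
      !![1, 0, 0, 1, 0, 0;
         0, 0, 1, 0, 0, 1;
         0, -1, 1, 0, 0, 0;
         1, 1, 0, 0, 0, 0;
         0, 0, 0, 0, 1, 1;
         0, 0, 0, 1, 1, 0] := by
    ext i j
    fin_cases i <;> fin_cases j <;> simp [ISum, counterexampleMatrix]
  rw [hM]
  simp [det_succ_row_zero, Fin.sum_univ_succ, Fin.succAbove, pow_succ, one_add_one_eq_two]

/-- The `N`-fold `I`-sum does not preserve total unimodularity: the displayed `3 × 4`
matrix `A` is totally unimodular, but its `2`-fold `I`-sum is not. -/
theorem iSum_not_preserve_totallyUnimodular :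
    ∃ A : Matrix (Fin 3) (Fin 4) ℚ,
      A = !![0, 1, -1, 1; 1, 0, 1, 0; 1, 1, 0, 0] ∧
      A.IsTotallyUnimodular ∧ ¬(ISum 2 A).IsTotallyUnimodular :=
  ⟨counterexampleMatrix, rfl, counterexampleMatrix_isTotallyUnimodular,
    not_isTotallyUnimodular_of_det_submatrix_eq_two _ _ _
      det_submatrix_iSum_two_counterexampleMatrix⟩
end
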